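/- arXiv:1110.2634 — 11 statements merged into one kernel-verified Lean document; each statement's English description precedes it below -/
import Mathlib

section
/- If u and v are quaternions with |u| < 1 and |v| < 1, then |(u - v)(1 - u * conj(v))⁻¹| < 1. -/
/-!
The Schur-type identity `|1 - u v̄|² - |u - v|² = (1 - |u|²)(1 - |v|²)` holds for quaternions
(both sides expand to `1 + |u|²|v|² - |u|² - |v|²`), and its right side is positive when
`|u|, |v| < 1`. Hence `|u - v| < |1 - u v̄|`, and the norm is multiplicative on the division
ring `ℍ`.
-/

open scoped Quaternion

namespace Quaternion

theorem normSq_one_sub_mul_star_sub_normSq_sub {R : Type*} [CommRing R] (u v : ℍ[R]) :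
    normSq (1 - u * star v) - normSq (u - v) = (1 - normSq u) * (1 - normSq v) := by
  simp only [normSq_def', re_sub, imI_sub, imJ_sub, imK_sub, re_mul, imI_mul, imJ_mul, imK_mul,
    re_star, imI_star, imJ_star, imK_star, re_one, imI_one, imJ_one, imK_one]
  ring

theorem norm_sub_lt_norm_one_sub_mul_star {u v : ℍ[ℝ]} (hu : ‖u‖ < 1) (hv : ‖v‖ < 1) :
    ‖u - v‖ < ‖1 - u * star v‖ := by
  have hu2 : normSq u < 1 := by
    rw [normSq_eq_norm_mul_self]; nlinarith [norm_nonneg u]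
  have hv2 : normSq v < 1 := by
    rw [normSq_eq_norm_mul_self]; nlinarith [norm_nonneg v]
  have hsq : normSq (u - v) < normSq (1 - u * star v) := by
    have hgap := normSq_one_sub_mul_star_sub_normSq_sub u v
    have hpos : 0 < (1 - normSq u) * (1 - normSq v) := mul_pos (sub_pos.2 hu2) (sub_pos.2 hv2)
    linarith
  rw [normSq_eq_norm_mul_self, normSq_eq_norm_mul_self] at hsq
  exact (mul_self_lt_mul_self_iff (norm_nonneg _) (norm_nonneg _)).2 hsq

end Quaternion

theorem schur_uv_right (u v : ℍ[ℝ]) (hu : ‖u‖ < 1) (hv : ‖v‖ < 1) :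
    ‖(u - v) * (1 - u * star v)⁻¹‖ < 1 := by
  have hlt := Quaternion.norm_sub_lt_norm_one_sub_mul_star hu hv
  rw [norm_mul, norm_inv, ← div_eq_mul_inv, div_lt_one ((norm_nonneg _).trans_lt hlt)]
  exact hlt
end

section
/- If u and v are quaternions with |u| < 1 and |v| < 1, then |(1 - u * conj(v))⁻¹ * (u - v)| < 1. -/
open scoped Quaternion

namespace Quaternion

theorem normSq_one_sub_mul_star {R : Type*} [CommRing R] (u v : ℍ[R]) :
    normSq (1 - u * star v) = normSq (u - v) + (1 - normSq u) * (1 - normSq v) := by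
  simp only [normSq_def', re_sub, imI_sub, imJ_sub, imK_sub, re_mul, imI_mul, imJ_mul, imK_mul,
    re_star, imI_star, imJ_star, imK_star, re_one, imI_one, imJ_one, imK_one]
  ring

end Quaternion

theorem schur_uv_left (u v : ℍ[ℝ]) (hu : ‖u‖ < 1) (hv : ‖v‖ < 1) :
    ‖(1 - u * star v)⁻¹ * (u - v)‖ < 1 := by
  have h := Quaternion.norm_sub_lt_norm_one_sub_mul_star hu hv
  rw [norm_mul, norm_inv, inv_mul_eq_div]
  exact (div_lt_one ((norm_nonneg _).trans_lt h)).2 h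
end

section
/- For quaternions p, q with |p| < 1 and |q| < 1, the quaternion 1 - 2·Re(q)·p + |q|²·p² is invertible (nonzero), where Re(q) is the real part of q. -/
open scoped Quaternion

/-!
The denominator is `g p` for the real quadratic `g t = 1 - 2 (Re q) t + ‖q‖² t²`.
If `p` is real, `|Re q| ≤ ‖q‖` gives `g p ≥ (1 - ‖q‖ ‖p‖)² > 0`. Otherwise `p` satisfies
`p² = 2 (Re p) p - ‖p‖²`, and a non-real quaternion is annihilated by no real quadratic other
than multiples of this one; comparing constant terms in `g p = 0` would force `‖q‖² ‖p‖² = 1`.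
-/

namespace Quaternion

theorem sq_eq_smul_sub_normSq {R : Type*} [CommRing R] (p : ℍ[R]) :
    p ^ 2 = (2 * p.re) • p - ((normSq p : R) : ℍ[R]) := by
  ext <;> simp [sq, normSq_def'] <;> ring

theorem eq_mul_normSq_of_quadratic_eq_zero {R : Type*} [Field R] {p : ℍ[R]} (hp : p.im ≠ 0)
    {c₀ c₁ c₂ : R} (h : (c₀ : ℍ[R]) + c₁ • p + c₂ • p ^ 2 = 0) : c₀ = c₂ * normSq p := by
  have hreduced : ((c₀ - c₂ * normSq p : R) : ℍ[R]) + (c₁ + c₂ * (2 * p.re)) • p = 0 := by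
    rw [← h, sq_eq_smul_sub_normSq]
    ext <;> simp <;> ring
  have hlin : c₁ + c₂ * (2 * p.re) = 0 := by
    simpa only [im_add, im_coe, im_smul, im_zero, zero_add, smul_eq_zero, hp, or_false]
      using congrArg im hreduced
  rwa [hlin, zero_smul, add_zero, ← coe_zero, coe_inj, sub_eq_zero] at hreduced

theorem abs_re_le_norm (q : ℍ) : |q.re| ≤ ‖q‖ := by
  simpa [inner_def] using abs_real_inner_le_norm q 1

end Quaternion

theorem one_sub_two_mul_add_sq_mul_sq_pos {a r t : ℝ} (ha : |a| ≤ r) (hrt : r * |t| < 1) :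
    0 < 1 - 2 * a * t + r ^ 2 * t ^ 2 := by
  have hat : a * t ≤ r * |t| := (le_abs_self _).trans
    (by rw [abs_mul]; exact mul_le_mul_of_nonneg_right ha (abs_nonneg t))
  nlinarith [sq_abs t, sq_nonneg (1 - r * |t|)]

theorem szego_denominator_ne_zero (p q : ℍ[ℝ]) (hp : ‖p‖ < 1) (hq : ‖q‖ < 1) :
    (1 : ℍ[ℝ]) - (2 * q.re) • p + (‖q‖ ^ 2) • p ^ 2 ≠ 0 := by
  have hqp : ‖q‖ * ‖p‖ < 1 := by nlinarith [norm_nonneg p, norm_nonneg q]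
  by_cases him : p.im = 0
  · obtain ⟨t, rfl⟩ : ∃ t : ℝ, p = t :=
      ⟨p.re, by rw [← p.re_add_im, him, add_zero, Quaternion.re_coe]⟩
    rw [Quaternion.norm_coe, Real.norm_eq_abs] at hqp
    have hpos := one_sub_two_mul_add_sq_mul_sq_pos (Quaternion.abs_re_le_norm q) hqp
    simpa [← Quaternion.coe_mul_eq_smul, ← Quaternion.coe_inj] using hpos.ne'
  · intro h
    have hnormSq : 1 = ‖q‖ ^ 2 * Quaternion.normSq p :=
      Quaternion.eq_mul_normSq_of_quadratic_eq_zero (c₁ := -(2 * q.re)) him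
        (by simpa [neg_smul, ← sub_eq_add_neg] using h)
    rw [Quaternion.normSq_eq_norm_mul_self] at hnormSq
    nlinarith [mul_nonneg (norm_nonneg q) (norm_nonneg p)]
end

section
/- For quaternions p, q with |p| < 1 and |q| < 1, the sum of the series ∑_{n=0}^∞ pⁿ conj(q)ⁿ equals (1 - 2Re(q)·p + |q|²·p²)⁻¹ · (1 - p·q). -/
/-!
The series `S = ∑ pⁿ q̄ⁿ` converges geometrically and satisfies `S = 1 + p S q̄`. Since
`2 Re q = q + q̄` and `|q|² = q̄ q` are real, hence central, multiplying that relation out gives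
`(1 - 2 Re(q) p + |q|² p²) S = 1 - p q`, and the right side is nonzero because `‖p q‖ < 1`.
-/

open scoped Quaternion

theorem summable_pow_mul_pow_of_norm_mul_lt_one {R : Type*} [NormedRing R] [NormOneClass R]
    [CompleteSpace R] {a b : R} (h : ‖a‖ * ‖b‖ < 1) : Summable fun n : ℕ ↦ a ^ n * b ^ n := by
  refine .of_norm_bounded (summable_geometric_of_lt_one (by positivity) h) fun n ↦ ?_
  calc ‖a ^ n * b ^ n‖ ≤ ‖a‖ ^ n * ‖b‖ ^ n :=
        (norm_mul_le _ _).trans (mul_le_mul (norm_pow_le _ n) (norm_pow_le _ n)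
          (norm_nonneg _) (by positivity))
    _ = (‖a‖ * ‖b‖) ^ n := (mul_pow _ _ _).symm

theorem tsum_pow_mul_pow_eq_one_add {R : Type*} [Ring R] [TopologicalSpace R]
    [IsTopologicalRing R] [T2Space R] {a b : R} (h : Summable fun n : ℕ ↦ a ^ n * b ^ n) :
    ∑' n : ℕ, a ^ n * b ^ n = 1 + a * (∑' n : ℕ, a ^ n * b ^ n) * b := by
  calc ∑' n : ℕ, a ^ n * b ^ n = a ^ 0 * b ^ 0 + ∑' n : ℕ, a ^ (n + 1) * b ^ (n + 1) :=
        h.tsum_eq_zero_add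
    _ = 1 + ∑' n : ℕ, a * (a ^ n * b ^ n) * b := by
        rw [pow_zero, pow_zero, mul_one]
        congr 1
        refine tsum_congr fun n ↦ ?_
        rw [pow_succ', pow_succ, mul_assoc, mul_assoc, mul_assoc]
    _ = 1 + a * (∑' n : ℕ, a ^ n * b ^ n) * b := by
        rw [(h.mul_left a).tsum_mul_right, h.tsum_mul_left]

namespace Quaternion

variable {R : Type*} [CommRing R]

theorem mul_eq_one_sub_mul_of_mul_mul_star_eq_sub_one {p q S : ℍ[R]}
    (h : p * S * star q = S - 1) :
    (1 - (2 * q.re) • p + normSq q • p ^ 2) * S = 1 - p * q := by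
  have h_re : (2 * q.re) • p * S = p * S * q + (S - 1) := by
    rw [← coe_mul_eq_smul, mul_assoc, coe_commutes, ← self_add_star', mul_add, h]
  have h_normSq : normSq q • p ^ 2 * S = p * S * q - p * q := by
    rw [← coe_mul_eq_smul, mul_assoc, coe_commutes, ← star_mul_self]
    calc p ^ 2 * S * (star q * q) = p * (p * S * star q) * q := by noncomm_ring
      _ = p * S * q - p * q := by rw [h]; noncomm_ring
  rw [add_mul, sub_mul, one_mul, h_re, h_normSq]
  abel

end Quaternion

theorem szego_kernel_closed_form (p q : ℍ[ℝ]) (hp : ‖p‖ < 1) (hq : ‖q‖ < 1) :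
    ∑' n : ℕ, p ^ n * (star q) ^ n =
      ((1 : ℍ[ℝ]) - (2 * q.re) • p + (‖q‖ ^ 2) • p ^ 2)⁻¹ * (1 - p * q) := by
  have hpq : ‖p‖ * ‖q‖ < 1 := mul_lt_one_of_nonneg_of_lt_one_left (norm_nonneg p) hp hq.le
  have hS := tsum_pow_mul_pow_eq_one_add
    (summable_pow_mul_pow_of_norm_mul_lt_one (a := p) (b := star q) (by rwa [norm_star]))
  have h_denom_mul := Quaternion.mul_eq_one_sub_mul_of_mul_mul_star_eq_sub_one
    (eq_sub_of_add_eq' hS.symm)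
  rw [Quaternion.normSq_eq_norm_mul_self, ← sq] at h_denom_mul
  have h_ne : (1 : ℍ[ℝ]) - p * q ≠ 0 := by
    refine sub_ne_zero.mpr fun h ↦ ?_
    simpa [← h] using (norm_mul_le p q).trans_lt hpq
  rw [← h_denom_mul, inv_mul_cancel_left₀ (left_ne_zero_of_mul (h_denom_mul ▸ h_ne))]
end

section
/- For quaternions p, q with |p| < 1 and |q| < 1, (1 - 2Re(q)·p + |q|²·p²)⁻¹ · (1 - p·q) = (1 - conj(p)·conj(q)) · (1 - 2Re(p)·conj(q) + |p|²·conj(q)²)⁻¹. -/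
/-!
Both sides agree because of the polynomial identity
`(1 - p q) (1 - 2 Re(p) q̄ + |p|² q̄²) = (1 - 2 Re(q) p + |q|² p²) (1 - p̄ q̄)`,
which only uses that `x + x̄` and `x x̄` are central. The denominators do not vanish:
`1 - 2 Re(q) p + |q|² p²` is a real number plus a real multiple of `Im p`, and if both vanish then
`|p| |q| = 1` (for non-real `p` the imaginary part forces `Re q = |q|² Re p`; for real `p` one uses
`1 - 2 Re(q) p + |q|² p² ≥ (1 - Re(q) p)²`).
-/

open scoped Quaternion

namespace Quaternion

variable {R : Type*}

section CommRing

variable [CommRing R]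

/-- The symmetrization `(1 - p q) ⋆ (1 - p q̄)` (slice product) of the slice-linear map `p ↦ 1 - p q`. -/
def kernelDenom (q p : ℍ[R]) : ℍ[R] :=
  1 - (2 * q.re) • p + normSq q • p ^ 2

theorem one_sub_mul_mul_kernelDenom (p q : ℍ[R]) :
    (1 - p * q) * kernelDenom p (star q) = kernelDenom q p * (1 - star p * star q) := by
  ext <;> simp [kernelDenom, normSq_def', sq] <;> ring

theorem re_kernelDenom (q p : ℍ[R]) :
    (kernelDenom q p).re = 1 - 2 * q.re * p.re + normSq q * (p.re ^ 2 - normSq p.im) := by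
  simp [kernelDenom, normSq_def', sq]
  ring

theorem im_kernelDenom (q p : ℍ[R]) :
    (kernelDenom q p).im = (2 * (normSq q * p.re - q.re)) • p.im := by
  ext <;> simp [kernelDenom, normSq_def', sq] <;> ring

theorem normSq_eq_re_sq_add_normSq_im (a : ℍ[R]) : normSq a = a.re ^ 2 + normSq a.im := by
  simp [normSq_def', add_assoc]

end CommRing

variable [CommRing R] [LinearOrder R] [IsStrictOrderedRing R]

theorem normSq_mul_normSq_eq_one_of_kernelDenom_eq_zero {q p : ℍ[R]}
    (h : kernelDenom q p = 0) : normSq p * normSq q = 1 := by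
  have hre : (kernelDenom q p).re = 0 := by rw [h, re_zero]
  have him : (kernelDenom q p).im = 0 := by rw [h, im_zero]
  rw [re_kernelDenom] at hre
  rw [im_kernelDenom, smul_eq_zero, mul_eq_zero] at him
  rw [normSq_eq_re_sq_add_normSq_im p]
  rcases him with (htwo | hre_q) | him_p
  · exact absurd htwo two_ne_zero
  · linear_combination -hre + 2 * p.re * hre_q
  · rw [him_p, map_zero] at hre ⊢
    have hq : q.re ^ 2 ≤ normSq q := by
      rw [normSq_eq_re_sq_add_normSq_im q]
      exact le_add_of_nonneg_right normSq_nonneg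
    nlinarith [sq_nonneg (1 - q.re * p.re), mul_nonneg (sub_nonneg.2 hq) (sq_nonneg p.re)]

end Quaternion

open Quaternion

theorem szego_kernel_two_forms (p q : ℍ[ℝ]) (hp : ‖p‖ < 1) (hq : ‖q‖ < 1) :
    ((1 : ℍ[ℝ]) - (2 * q.re) • p + (‖q‖ ^ 2) • p ^ 2)⁻¹ * (1 - p * q) =
      (1 - star p * star q) *
        ((1 : ℍ[ℝ]) - (2 * p.re) • star q + (‖p‖ ^ 2) • (star q) ^ 2)⁻¹ := by
  have hsq (a : ℍ[ℝ]) : ‖a‖ ^ 2 = normSq a := by rw [sq, normSq_eq_norm_mul_self]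
  have hpq : normSq p * normSq q < 1 := by
    rw [← hsq, ← hsq, ← mul_pow]
    exact pow_lt_one₀ (by positivity)
      (mul_lt_one_of_nonneg_of_lt_one_left (norm_nonneg p) hp hq.le) two_ne_zero
  have hA : kernelDenom q p ≠ 0 := fun h ↦
    hpq.ne (normSq_mul_normSq_eq_one_of_kernelDenom_eq_zero h)
  have hD : kernelDenom p (star q) ≠ 0 := fun h ↦ hpq.ne <| by
    simpa [normSq_star, mul_comm] using normSq_mul_normSq_eq_one_of_kernelDenom_eq_zero h
  rw [hsq, hsq]
  change (kernelDenom q p)⁻¹ * _ = _ * (kernelDenom p (star q))⁻¹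
  rw [inv_mul_eq_iff_eq_mul₀ hA, ← mul_assoc, eq_mul_inv_iff_mul_eq₀ hD]
  exact one_sub_mul_mul_kernelDenom p q
end

section
/- Let A be a bounded right-linear operator on a two-sided quaternionic Banach space (or an n×n quaternionic matrix) and let r be a quaternion with ‖A‖ < |r|. Then the operator A² - 2Re(r)·A + |r|²·I is invertible and ∑_{n=0}^∞ Aⁿ r^{-1-n} = -(A² - 2Re(r)A + |r|²I)⁻¹ (A - conj(r)·I). -/
open scoped Quaternion
attribute [local instance] Matrix.linftyOpNormedRing

/-!
Write `R = r • 1` and `S = ∑ Aⁿ R⁻¹⁻ⁿ`. Shifting the index gives the Sylvester-type relation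
`S R = 1 + A S`, and since `r` is a root of its real characteristic polynomial
`x² - 2 Re(r) x + |r|²`, applying that polynomial to `A` yields `(A² - 2 Re(r) A + |r|²) S = r̄ - A`.
The right-hand side is invertible by a Neumann series because `‖A‖ < |r̄|`, so the quadratic has a
right inverse; for matrices over a division ring (a Dedekind-finite ring) it is then invertible.
-/

theorem Quaternion.sq_sub_two_re_smul_add_normSq {R : Type*} [CommRing R] (a : ℍ[R]) :
    a ^ 2 - (2 * a.re) • a + ((normSq a : R) : ℍ[R]) = 0 := by
  rw [← coe_mul_eq_smul, ← self_add_star', ← star_mul_self, sq, add_mul]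
  abel

theorem sq_sub_smul_add_smul_mul_eq_of_mul_eq_one_add_mul {𝕜 E : Type*} [CommSemiring 𝕜] [Ring E]
    [Algebra 𝕜 E] {A R S : E} {a b : 𝕜}
    (hS : S * R = 1 + A * S) (hR : R ^ 2 - a • R + b • (1 : E) = 0) :
    (A ^ 2 - a • A + b • 1) * S = a • 1 - R - A := by
  have hAS : A * S = S * R - 1 := by rw [hS]; abel
  calc (A ^ 2 - a • A + b • 1) * S = A * (A * S) - a • (A * S) + b • S := by
        rw [sq, add_mul, sub_mul, mul_assoc, smul_mul_assoc, smul_mul_assoc, one_mul]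
    _ = S * (R ^ 2 - a • R + b • 1) + (a • 1 - R - A) := by
        rw [hAS, mul_sub, ← mul_assoc, hAS]
        simp only [sq, mul_add, mul_sub, sub_mul, mul_smul_comm, smul_sub, mul_assoc, mul_one,
          one_mul]
        abel
    _ = a • 1 - R - A := by rw [hR, mul_zero, zero_add]

section NormedRing

variable {E : Type*} [NormedRing E] [CompleteSpace E] {A B R : E}

theorem summable_pow_mul_pow_succ (h : ‖A‖ * ‖B‖ < 1) :
    Summable fun k : ℕ => A ^ k * B ^ (k + 1) := by
  refine (summable_nat_add_iff 1).1 <| Summable.of_norm_bounded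
    ((summable_geometric_of_lt_one (by positivity) h).mul_left (‖A‖ * ‖B‖ ^ 2)) fun k => ?_
  calc ‖A ^ (k + 1) * B ^ (k + 1 + 1)‖ ≤ ‖A‖ ^ (k + 1) * ‖B‖ ^ (k + 1 + 1) :=
        (norm_mul_le _ _).trans <| mul_le_mul (norm_pow_le' A k.succ_pos)
          (norm_pow_le' B (k + 1).succ_pos) (norm_nonneg _) (by positivity)
    _ = ‖A‖ * ‖B‖ ^ 2 * (‖A‖ * ‖B‖) ^ k := by ring

theorem tsum_pow_mul_pow_succ_mul_eq (h : ‖A‖ * ‖B‖ < 1) (hBR : B * R = 1) :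
    (∑' k : ℕ, A ^ k * B ^ (k + 1)) * R = 1 + A * ∑' k : ℕ, A ^ k * B ^ (k + 1) := by
  have hsum := summable_pow_mul_pow_succ h
  have hshift (k : ℕ) : A ^ (k + 1) * B ^ (k + 1 + 1) = A * (A ^ k * B ^ (k + 1)) * B := by
    rw [pow_succ', pow_succ, mul_assoc, mul_assoc, mul_assoc]
  have hS : ∑' k : ℕ, A ^ k * B ^ (k + 1) = B + A * (∑' k : ℕ, A ^ k * B ^ (k + 1)) * B := by
    nth_rw 1 [hsum.tsum_eq_zero_add]
    rw [tsum_congr hshift, (hsum.mul_left A).tsum_mul_right, hsum.tsum_mul_left, pow_zero,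
      one_mul, zero_add, pow_one]
  set S := ∑' k : ℕ, A ^ k * B ^ (k + 1)
  calc S * R = B * R + A * S * (B * R) := by rw [← mul_assoc, ← add_mul, ← hS]
    _ = 1 + A * S := by rw [hBR, mul_one]

theorem isUnit_sub_of_mul_eq_one (hBR : B * R = 1) (hRB : R * B = 1) (h : ‖B‖ * ‖A‖ < 1) :
    IsUnit (R - A) := by
  have hR : IsUnit R := ⟨⟨R, B, hRB, hBR⟩, rfl⟩
  have hBA : IsUnit (1 - B * A) := (Units.oneSub (B * A) ((norm_mul_le B A).trans_lt h)).isUnit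
  rw [show R - A = R * (1 - B * A) by rw [mul_sub, mul_one, ← mul_assoc, hRB, one_mul]]
  exact hR.mul hBA

end NormedRing

theorem Matrix.linfty_opNorm_scalar_le {m α : Type*} [Fintype m] [DecidableEq m] [NormedRing α]
    (c : α) : ‖scalar m c‖ ≤ ‖c‖ := by
  rw [scalar_apply, linfty_opNorm_diagonal]
  exact pi_norm_le_iff_of_nonneg (norm_nonneg c) |>.2 fun _ => le_rfl

theorem isUnit_and_tsum_pow_mul_map_inv_pow_eq {E : Type*} [NormedRing E] [CompleteSpace E]
    [Algebra ℝ E] [IsDedekindFiniteMonoid E] (ι : ℍ[ℝ] →ₐ[ℝ] E) (hι : ∀ q, ‖ι q‖ ≤ ‖q‖)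
    {A : E} {r : ℍ[ℝ]} (h : ‖A‖ < ‖r‖) :
    IsUnit (A ^ 2 - (2 * r.re) • A + (‖r‖ ^ 2) • 1) ∧
      ∑' k : ℕ, A ^ k * ι r⁻¹ ^ (k + 1) =
        Ring.inverse (A ^ 2 - (2 * r.re) • A + (‖r‖ ^ 2) • 1) * (ι (star r) - A) := by
  have hr : 0 < ‖r‖ := (norm_nonneg A).trans_lt h
  have hsmall (q : ℍ[ℝ]) (hq : ‖q‖ = ‖r‖) : ‖ι q⁻¹‖ * ‖A‖ < 1 :=
    calc ‖ι q⁻¹‖ * ‖A‖ ≤ ‖r‖⁻¹ * ‖A‖ := by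
          gcongr; exact (hι _).trans_eq (by rw [norm_inv, hq])
      _ < 1 := by rwa [inv_mul_lt_iff₀ hr, mul_one]
  have hinv (q : ℍ[ℝ]) (hq : ‖q‖ = ‖r‖) : ι q⁻¹ * ι q = 1 ∧ ι q * ι q⁻¹ = 1 := by
    have hq0 : q ≠ 0 := norm_pos_iff.1 (hq ▸ hr)
    simp [← map_mul, hq0]
  have hcoe (x : ℝ) : ι x = x • 1 := by
    rw [← Algebra.algebraMap_eq_smul_one, ← ι.commutes]; rfl
  have hquad : ι r ^ 2 - (2 * r.re) • ι r + (‖r‖ ^ 2) • (1 : E) = 0 := by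
    have := congrArg ι r.sq_sub_two_re_smul_add_normSq
    rwa [map_add, map_sub, map_pow, map_smul, hcoe, Quaternion.normSq_eq_norm_mul_self, ← sq,
      map_zero] at this
  have hconj : (2 * r.re) • (1 : E) - ι r = ι (star r) := by
    rw [← hcoe, ← Quaternion.self_add_star', map_add, add_sub_cancel_left]
  have hP := sq_sub_smul_add_smul_mul_eq_of_mul_eq_one_add_mul
    (tsum_pow_mul_pow_succ_mul_eq (by rw [mul_comm]; exact hsmall r rfl) (hinv r rfl).1) hquad
  rw [hconj] at hP
  have hPunit := isUnit_of_mul_isUnit_left <| hP ▸ isUnit_sub_of_mul_eq_one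
    (hinv _ (norm_star r)).1 (hinv _ (norm_star r)).2 (hsmall (star r) (norm_star r))
  refine ⟨hPunit, ?_⟩
  rw [← hP, ← mul_assoc, Ring.inverse_mul_cancel _ hPunit, one_mul]

theorem left_S_resolvent_series (n : ℕ) (A : Matrix (Fin n) (Fin n) ℍ[ℝ]) (r : ℍ[ℝ])
    (h : ‖A‖ < ‖r‖) :
    IsUnit (A ^ 2 - (2 * r.re) • A + (‖r‖ ^ 2) • (1 : Matrix (Fin n) (Fin n) ℍ[ℝ])) ∧
      ∑' k : ℕ, A ^ k * ((r⁻¹ ^ (k + 1)) • (1 : Matrix (Fin n) (Fin n) ℍ[ℝ])) =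
        -(Ring.inverse (A ^ 2 - (2 * r.re) • A + (‖r‖ ^ 2) • 1) *
            (A - (star r) • (1 : Matrix (Fin n) (Fin n) ℍ[ℝ]))) := by
  have hsmul (c : ℍ[ℝ]) :
      c • (1 : Matrix (Fin n) (Fin n) ℍ[ℝ]) = Matrix.scalarAlgHom (Fin n) ℝ c := by
    simp [Matrix.smul_one_eq_diagonal]
  -- the `linftyOp` uniformity agrees with the product one only up to defeq
  have : @CompleteSpace (Matrix (Fin n) (Fin n) ℍ[ℝ]) PseudoMetricSpace.toUniformSpace :=
    inferInstanceAs (CompleteSpace (Fin n → Fin n → ℍ[ℝ]))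
  obtain ⟨hunit, hsum⟩ := isUnit_and_tsum_pow_mul_map_inv_pow_eq (Matrix.scalarAlgHom (Fin n) ℝ)
    Matrix.linfty_opNorm_scalar_le h
  refine ⟨hunit, ?_⟩
  simp only [hsmul, map_pow]
  rw [← mul_neg, neg_sub]
  exact hsum
end

section
/- Let A be a quaternionic n×n matrix and r a quaternion with ‖A‖ < |r|. Then ∑_{n=0}^∞ r^{-1-n} Aⁿ = -(A - conj(r)·I)(A² - 2Re(r)A + |r|²I)⁻¹ (the right S-resolvent identity). -/
/-!
Put `S = ∑ r⁻¹ ^ (k + 1) • A ^ k`. Shifting the summation index gives the resolvent equation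
`S A = r S - 1`. As `r` and `r̄` are the roots of the real quadratic `x² - 2 Re(r) x + |r|²`,
multiplying out yields `S (A² - 2 Re(r) A + |r|² I) = r̄ I - A`, and the right-hand side is
invertible by a Neumann series since `‖A‖ < |r̄|`. Matrices over `ℍ` are Dedekind-finite, so the
quadratic is invertible as well and `S = (r̄ I - A) (A² - 2 Re(r) A + |r|² I)⁻¹`.
-/

section DivisionRing

variable {𝕜 E : Type*} [DivisionRing 𝕜] [Ring E] [Module 𝕜 E] [IsScalarTower 𝕜 E E]

theorem isUnit_smul_one {q : 𝕜} (hq : q ≠ 0) : IsUnit (q • (1 : E)) :=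
  ⟨⟨q • 1, q⁻¹ • 1, by rw [smul_mul_assoc, one_mul, smul_smul, mul_inv_cancel₀ hq, one_smul],
    by rw [smul_mul_assoc, one_mul, smul_smul, inv_mul_cancel₀ hq, one_smul]⟩, rfl⟩

theorem HasSum.mul_eq_smul_sub_one [TopologicalSpace E] [IsTopologicalRing E] [T2Space E]
    [ContinuousConstSMul 𝕜 E] {r : 𝕜} (hr : r ≠ 0) {A S : E}
    (hS : HasSum (fun k : ℕ => r⁻¹ ^ (k + 1) • A ^ k) S) : S * A = r • S - 1 := by
  have hshift (k : ℕ) :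
      r⁻¹ ^ (k + 1) • A ^ k * A = r • (r⁻¹ ^ (k + 1 + 1) • A ^ (k + 1)) := by
    rw [smul_mul_assoc, ← pow_succ, smul_smul, pow_succ' r⁻¹ (k + 1), ← mul_assoc,
      mul_inv_cancel₀ hr, one_mul]
  have hshifted : HasSum (fun k : ℕ => r • (r⁻¹ ^ (k + 1 + 1) • A ^ (k + 1)))
      (r • (S - ∑ k ∈ Finset.range 1, r⁻¹ ^ (k + 1) • A ^ k)) :=
    ((hasSum_nat_add_iff' 1).mpr hS).const_smul r
  rw [Finset.sum_range_one, smul_sub, _root_.zero_add, pow_one, pow_zero, smul_smul,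
    mul_inv_cancel₀ hr, one_smul, ← funext hshift] at hshifted
  exact (hS.mul_right A).unique hshifted

end DivisionRing

section Normed

variable {𝕜 E : Type*} [NormedDivisionRing 𝕜] [NormedRing E] [CompleteSpace E] [Module 𝕜 E]
  [IsBoundedSMul 𝕜 E]

theorem summable_inv_pow_succ_smul_pow {r : 𝕜} {A : E} (h : ‖A‖ < ‖r‖) :
    Summable fun k : ℕ => r⁻¹ ^ (k + 1) • A ^ k := by
  have hr : 0 < ‖r‖ := (norm_nonneg A).trans_lt h
  refine Summable.of_norm_bounded_eventually_nat (g := fun k => ‖r‖⁻¹ * (‖A‖ / ‖r‖) ^ k)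
    ((summable_geometric_of_lt_one (by positivity) ((div_lt_one hr).mpr h)).mul_left _) ?_
  filter_upwards [Filter.eventually_gt_atTop 0] with k hk
  calc ‖r⁻¹ ^ (k + 1) • A ^ k‖ ≤ ‖r⁻¹ ^ (k + 1)‖ * ‖A ^ k‖ := norm_smul_le _ _
    _ ≤ ‖r‖⁻¹ ^ (k + 1) * ‖A‖ ^ k := by
      rw [norm_pow, norm_inv]; gcongr; exact norm_pow_le' A hk
    _ = ‖r‖⁻¹ * (‖A‖ / ‖r‖) ^ k := by rw [div_eq_mul_inv, mul_pow, pow_succ]; ring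

theorem isUnit_smul_one_sub [IsScalarTower 𝕜 E E] {q : 𝕜} {A : E} (h : ‖A‖ < ‖q‖) :
    IsUnit (q • 1 - A) := by
  have hq : 0 < ‖q‖ := (norm_nonneg A).trans_lt h
  have hq0 : q ≠ 0 := norm_pos_iff.mp hq
  have hsmall : ‖q⁻¹ • A‖ < 1 := calc
    ‖q⁻¹ • A‖ ≤ ‖q⁻¹‖ * ‖A‖ := norm_smul_le _ _
    _ = ‖A‖ / ‖q‖ := by rw [norm_inv, inv_mul_eq_div]
    _ < 1 := (div_lt_one hq).mpr h
  have hfactor : q • 1 - A = q • (1 : E) * (1 - q⁻¹ • A) := by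
    rw [smul_mul_assoc, one_mul, smul_sub, smul_smul, mul_inv_cancel₀ hq0, one_smul]
  rw [hfactor]
  exact (isUnit_smul_one hq0).mul (isUnit_one_sub_of_norm_lt_one hsmall)

end Normed

theorem mul_quadratic_eq_of_mul_eq_smul_sub_one {R 𝕜 E : Type*} [CommRing R] [Ring 𝕜]
    [Algebra R 𝕜] [Ring E] [Algebra R E] [Module 𝕜 E] [IsScalarTower R 𝕜 E]
    [IsScalarTower 𝕜 E E] {r s : 𝕜} {a b : R}
    (hsum : r + s = algebraMap R 𝕜 a) (hprod : r * s = algebraMap R 𝕜 b) {A S : E}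
    (h : S * A = r • S - 1) : S * (A ^ 2 - a • A + b • 1) = s • 1 - A := by
  have hcomm : s * r = r * s := by
    rw [eq_sub_of_add_eq' hsum, sub_mul, mul_sub, Algebra.commutes]
  have hA2 : S * A ^ 2 = (r * r) • S - r • 1 - A := by
    rw [pow_two, ← mul_assoc, h, sub_mul, smul_mul_assoc, h, one_mul, smul_sub, smul_smul]
  rw [mul_add, mul_sub, hA2, mul_smul_comm, mul_smul_comm, h, mul_one, ← algebraMap_smul 𝕜 a,
    ← algebraMap_smul 𝕜 b, ← hsum, ← hprod, smul_sub, smul_smul, add_mul, add_smul, add_smul,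
    hcomm]
  abel

open scoped Quaternion

attribute [local instance] Matrix.linftyOpNormedRing

-- The ℝ-normed-space structure is what makes the matrices complete (via finite dimension).
attribute [local instance] Matrix.linftyOpNormedSpace Matrix.linftyOpIsBoundedSMul

theorem right_S_resolvent_series (n : ℕ) (A : Matrix (Fin n) (Fin n) ℍ[ℝ]) (r : ℍ[ℝ])
    (h : ‖A‖ < ‖r‖) :
    ∑' k : ℕ, (r⁻¹ ^ (k + 1)) • A ^ k =
      -((A - (star r) • (1 : Matrix (Fin n) (Fin n) ℍ[ℝ])) *
          Ring.inverse (A ^ 2 - (2 * r.re) • A +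
            (‖r‖ ^ 2) • (1 : Matrix (Fin n) (Fin n) ℍ[ℝ]))) := by
  have hr : r ≠ 0 := norm_pos_iff.mp ((norm_nonneg A).trans_lt h)
  have hprod : r * star r = algebraMap ℝ ℍ[ℝ] (‖r‖ ^ 2) := by
    rw [Quaternion.self_mul_star, Quaternion.normSq_eq_norm_mul_self, sq]; rfl
  set B := A ^ 2 - (2 * r.re) • A + (‖r‖ ^ 2) • (1 : Matrix (Fin n) (Fin n) ℍ[ℝ])
  have hSB : (∑' k : ℕ, (r⁻¹ ^ (k + 1)) • A ^ k) * B = star r • 1 - A :=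
    mul_quadratic_eq_of_mul_eq_smul_sub_one r.self_add_star' hprod
      ((summable_inv_pow_succ_smul_pow h).hasSum.mul_eq_smul_sub_one hr)
  have hB : IsUnit B := isUnit_of_mul_isUnit_right <| by
    rw [hSB]; exact isUnit_smul_one_sub (by rwa [Quaternion.norm_star])
  rw [← Ring.mul_inverse_cancel_right B (∑' k : ℕ, (r⁻¹ ^ (k + 1)) • A ^ k) hB, hSB, ← neg_sub,
    neg_mul]
end

section
/- Let A be a quaternionic matrix and r ∈ ℍ such that A² - 2Re(r)A + |r|²I is invertible. Define S_L⁻¹(r,A) = -(A² - 2Re(r)A + |r|²I)⁻¹(A - conj(r)I). Then S_L⁻¹(r,A)·r - A·S_L⁻¹(r,A) = I, where ·r denotes right scalar multiplication by r. -/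
open scoped Quaternion

/-!
Write `Q = A² - 2 Re(r) A + |r|² I`. Since `star r + r = 2 Re(r)` and `star r * r = |r|²` are real,
hence central, `Q = A (A - r̄) - (A - r̄) r`. As `A` commutes with `Q`, it commutes with `Q⁻¹`, so
`S r - A S = Q⁻¹ (A (A - r̄) - (A - r̄) r) = Q⁻¹ Q = I` for `S = -Q⁻¹ (A - r̄)`.
-/

theorem Commute.ring_inverse_right {M₀ : Type*} [MonoidWithZero M₀] {a q : M₀}
    (hq : IsUnit q) (h : Commute a q) : Commute a (Ring.inverse q) := by
  obtain ⟨u, rfl⟩ := hq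
  rw [Ring.inverse_unit]
  exact h.units_inv_right

theorem Commute.neg_inverse_mul_sylvester_eq_one {R : Type*} [Ring R] {a c d q : R}
    (hq : a * (a - c) - (a - c) * d = q) (hunit : IsUnit q) (hcomm : Commute a q) :
    -(Ring.inverse q * (a - c)) * d - a * -(Ring.inverse q * (a - c)) = 1 :=
  calc -(Ring.inverse q * (a - c)) * d - a * -(Ring.inverse q * (a - c))
      = Ring.inverse q * (a * (a - c) - (a - c) * d) := by
        rw [mul_neg, ← mul_assoc, (hcomm.ring_inverse_right hunit).eq]
        noncomm_ring
    _ = 1 := by rw [hq, Ring.inverse_mul_cancel q hunit]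

theorem Commute.self_sq_sub_smul_add_smul_one {R A : Type*} [CommSemiring R] [Ring A]
    [Algebra R A] (a : A) (x y : R) : Commute a (a ^ 2 - x • a + y • 1) :=
  (((Commute.refl a).pow_right 2).sub_right ((Commute.refl a).smul_right x)).add_right
    ((Commute.one_right a).smul_right y)

theorem Quaternion.coe_smul_eq_smul {R M : Type*} [CommRing R] [AddCommGroup M] [Module R M]
    [Module ℍ[R] M] [IsScalarTower R ℍ[R] M] (x : R) (m : M) : (x : ℍ[R]) • m = x • m := by
  rw [← Quaternion.algebraMap_def, algebraMap_smul]

namespace Matrix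

variable {R : Type*} [CommRing R] {n : Type*} [Fintype n] [DecidableEq n]

theorem mul_sub_star_smul_one_sub_mul_smul_one (A : Matrix n n ℍ[R]) (r : ℍ[R]) :
    A * (A - star r • 1) - (A - star r • 1) * (r • 1) =
      A ^ 2 - (2 * r.re) • A + Quaternion.normSq r • 1 := by
  have hsum : A * (star r • 1) + A * (r • 1) = (2 * r.re) • A := by
    rw [← mul_add, ← add_smul, Quaternion.star_add_self', Quaternion.coe_smul_eq_smul, mul_smul_comm,
      mul_one]
  have hprod : (star r • 1 : Matrix n n ℍ[R]) * (r • 1) = Quaternion.normSq r • 1 := by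
    rw [smul_mul_assoc, one_mul, smul_smul, Quaternion.star_mul_self, Quaternion.coe_smul_eq_smul]
  rw [← hsum, ← hprod, sq]
  noncomm_ring

end Matrix

theorem left_S_resolvent_equation (n : ℕ) (A : Matrix (Fin n) (Fin n) ℍ[ℝ]) (r : ℍ[ℝ])
    (h : IsUnit (A ^ 2 - (2 * r.re) • A + (‖r‖ ^ 2) • (1 : Matrix (Fin n) (Fin n) ℍ[ℝ]))) :
    (-(Ring.inverse (A ^ 2 - (2 * r.re) • A + (‖r‖ ^ 2) • 1) *
          (A - (star r) • (1 : Matrix (Fin n) (Fin n) ℍ[ℝ])))) *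
        (r • (1 : Matrix (Fin n) (Fin n) ℍ[ℝ])) -
      A * (-(Ring.inverse (A ^ 2 - (2 * r.re) • A + (‖r‖ ^ 2) • 1) *
          (A - (star r) • (1 : Matrix (Fin n) (Fin n) ℍ[ℝ])))) = 1 := by
  have hQ : A * (A - star r • 1) - (A - star r • 1) * (r • 1) =
      A ^ 2 - (2 * r.re) • A + (‖r‖ ^ 2) • (1 : Matrix (Fin n) (Fin n) ℍ[ℝ]) := by
    rw [Matrix.mul_sub_star_smul_one_sub_mul_smul_one, Quaternion.normSq_eq_norm_mul_self, ← sq]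
  exact Commute.neg_inverse_mul_sylvester_eq_one hQ h
    (Commute.self_sq_sub_smul_add_smul_one A _ _)
end

section
/- Let A be a quaternionic matrix and s ∈ ℍ such that A² - 2Re(s)A + |s|²I is invertible. Define S_R⁻¹(s,A) = -(A - conj(s)I)(A² - 2Re(s)A + |s|²I)⁻¹. Then s·S_R⁻¹(s,A) - S_R⁻¹(s,A)·A = I, where s· denotes left scalar multiplication by s. -/
/-!
With `P = A - s̄ I` and `Q_s(A) = A² - 2 Re(s) A + |s|² I` one has `P A - s P = Q_s(A)`, since
`s + s̄ = 2 Re(s)` and `s s̄ = |s|²` are real and so act centrally. As `Q_s(A)` is a real polynomial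
in `A`, its inverse commutes with `A`, and multiplying the identity on the right by `Q_s(A)⁻¹`
gives `s S - S A = I` for `S = -P Q_s(A)⁻¹`.
-/

open scoped Quaternion

theorem smul_sub_mul_eq_one_of_mul_sub_smul_eq {R M : Type*} [Monoid R] [Ring M]
    [DistribMulAction R M] [IsScalarTower R M M] {s : R} {A P B : M} (hB : IsUnit B)
    (hAB : Commute A B) (hPB : P * A - s • P = B) :
    s • (-(P * Ring.inverse B)) - (-(P * Ring.inverse B)) * A = 1 := by
  obtain ⟨u, rfl⟩ := hB
  rw [Ring.inverse_unit]
  calc s • (-(P * ↑u⁻¹)) - (-(P * ↑u⁻¹)) * A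
      = P * (↑u⁻¹ * A) - s • P * ↑u⁻¹ := by
        rw [smul_neg, ← smul_mul_assoc, neg_mul, mul_assoc]; abel
    _ = (P * A - s • P) * ↑u⁻¹ := by rw [← hAB.units_inv_right.eq, ← mul_assoc, sub_mul]
    _ = 1 := by rw [hPB, Units.mul_inv]

section
variable {M : Type*} [Ring M] [Algebra ℝ M]

noncomputable def sCharPoly (s : ℍ[ℝ]) (A : M) : M := A ^ 2 - (2 * s.re) • A + (‖s‖ ^ 2) • 1

theorem commute_sCharPoly (s : ℍ[ℝ]) (A : M) : Commute A (sCharPoly s A) :=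
  ((Commute.refl A).pow_right 2).sub_right ((Commute.refl A).smul_right _) |>.add_right
    ((Commute.one_right A).smul_right _)

theorem sub_star_smul_one_mul_sub_smul_eq_sCharPoly [Module ℍ[ℝ] M] [IsScalarTower ℝ ℍ[ℝ] M]
    [IsScalarTower ℍ[ℝ] M M] (s : ℍ[ℝ]) (A : M) :
    (A - star s • 1) * A - s • (A - star s • 1) = sCharPoly s A := by
  have hre : s + star s = ((2 * s.re : ℝ) : ℍ[ℝ]) := Quaternion.self_add_star' s
  have hnorm : s * star s = ((‖s‖ ^ 2 : ℝ) : ℍ[ℝ]) := by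
    rw [Quaternion.self_mul_star, Quaternion.normSq_eq_norm_mul_self, sq]
  have hcoe (r : ℝ) (m : M) : (r : ℍ[ℝ]) • m = r • m := algebraMap_smul ℍ[ℝ] r m
  calc (A - star s • 1) * A - s • (A - star s • 1)
      = A ^ 2 - (s + star s) • A + (s * star s) • 1 := by
        rw [sub_mul, smul_mul_assoc, one_mul, smul_sub, smul_smul, add_smul, sq]; abel
    _ = sCharPoly s A := by rw [hre, hnorm, hcoe, hcoe, sCharPoly]
end

theorem right_S_resolvent_equation (n : ℕ) (A : Matrix (Fin n) (Fin n) ℍ[ℝ]) (s : ℍ[ℝ])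
    (h : IsUnit (A ^ 2 - (2 * s.re) • A + (‖s‖ ^ 2) • (1 : Matrix (Fin n) (Fin n) ℍ[ℝ]))) :
    s • (-((A - (star s) • (1 : Matrix (Fin n) (Fin n) ℍ[ℝ])) *
          Ring.inverse (A ^ 2 - (2 * s.re) • A + (‖s‖ ^ 2) • 1))) -
      (-((A - (star s) • (1 : Matrix (Fin n) (Fin n) ℍ[ℝ])) *
          Ring.inverse (A ^ 2 - (2 * s.re) • A + (‖s‖ ^ 2) • 1))) * A = 1 :=
  smul_sub_mul_eq_one_of_mul_sub_smul_eq h (commute_sCharPoly s A)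
    (sub_star_smul_one_mul_sub_smul_eq_sCharPoly s A)
end

section
/- Let A be a quaternionic n×n matrix and p ∈ ℍ with |p|·‖A‖ < 1. Then ∑_{n=0}^∞ pⁿ Aⁿ = (I - conj(p)·A)(|p|²A² - 2Re(p)A + I)⁻¹, where pⁿAⁿ means left scalar multiplication of the matrix Aⁿ entrywise by the quaternion pⁿ. -/
/-! Left multiplication by quaternion scalars satisfies `(q • M) * N = q • (M * N)` but not
`M * (q • N) = q • (M * N)`, so `∑ pᵏ • Aᵏ` cannot be inverted as a geometric series in `p • A`.
Instead, the real polynomial `D = ‖p‖² A² - 2 Re(p) A + 1` commutes with `A`, and with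
`p̄ p = ‖p‖²`, `p̄ + p = 2 Re(p)` the terms telescope:
`(pᵏ • Aᵏ) * D = vₖ - vₖ₊₁` for `vₖ = pᵏ • Aᵏ - (p̄ pᵏ) • Aᵏ⁺¹`, so `S * D = 1 - p̄ • A` for
`S = ∑ pᵏ • Aᵏ`. Telescoping once more, `∑ p̄ᵏ • (S * Aᵏ)` is a left inverse of `D`, and matrices
over a division ring are Dedekind-finite, so `D` is invertible and `S = (1 - p̄ • A) * D⁻¹`. -/

open Filter Topology
open scoped Quaternion

attribute [local instance] Matrix.linftyOpNormedRing

theorem tsum_mul_eq_of_mul_eq_sub_succ {R : Type*} [Ring R] [TopologicalSpace R]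
    [IsTopologicalRing R] [T2Space R] {u w : ℕ → R} {b : R} (hu : Summable u)
    (hub : ∀ k, u k * b = w k - w (k + 1)) (hw : Tendsto w atTop (𝓝 0)) :
    (∑' k, u k) * b = w 0 := by
  have hpartial : Tendsto (fun N ↦ ∑ k ∈ Finset.range N, u k * b) atTop
      (𝓝 ((∑' k, u k) * b)) :=
    (hu.hasSum.mul_right b).tendsto_sum_nat
  simp only [hub, Finset.sum_range_sub'] at hpartial
  simpa using tendsto_nhds_unique hpartial (tendsto_const_nhds.sub hw)

namespace Matrix

variable {m : Type*} [Fintype m] [DecidableEq m]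

theorem linfty_opNorm_one_le {α : Type*} [NormedRing α] [NormOneClass α] :
    ‖(1 : Matrix m m α)‖ ≤ 1 := by
  rw [← diagonal_one, linfty_opNorm_diagonal]
  exact (pi_norm_le_iff_of_nonneg zero_le_one).2 fun _ ↦ norm_one.le

theorem linfty_opNorm_pow_le {α : Type*} [NormedRing α] [NormOneClass α]
    (A : Matrix m m α) : ∀ k : ℕ, ‖A ^ k‖ ≤ ‖A‖ ^ k
  | 0 => by simpa using linfty_opNorm_one_le
  | k + 1 => norm_pow_le' A k.succ_pos

section NormedDivisionRing

attribute [local instance] Matrix.linftyOpIsBoundedSMul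

variable {α : Type*} [NormedDivisionRing α]

theorem norm_pow_smul_mul_pow_le (q : α) (M A : Matrix m m α) (k : ℕ) :
    ‖q ^ k • (M * A ^ k)‖ ≤ ‖M‖ * (‖q‖ * ‖A‖) ^ k :=
  calc ‖q ^ k • (M * A ^ k)‖ ≤ ‖q‖ ^ k * (‖M‖ * ‖A‖ ^ k) := by
        refine (norm_smul_le _ _).trans ?_
        rw [norm_pow]
        gcongr
        exact (norm_mul_le _ _).trans (by gcongr; exact linfty_opNorm_pow_le A k)
    _ = ‖M‖ * (‖q‖ * ‖A‖) ^ k := by ring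

variable [CompleteSpace α]

theorem summable_pow_smul_mul_pow {q : α} {A : Matrix m m α} (h : ‖q‖ * ‖A‖ < 1)
    (M : Matrix m m α) : Summable fun k ↦ q ^ k • (M * A ^ k) :=
  -- the uniformity of the operator norm is the product one only up to unfolding
  have : @CompleteSpace (Matrix m m α) PseudoMetricSpace.toUniformSpace :=
    (inferInstance : CompleteSpace (m → m → α))
  .of_norm_bounded ((summable_geometric_of_lt_one (by positivity) h).mul_left ‖M‖)
    (norm_pow_smul_mul_pow_le q M A)

theorem summable_pow_smul_pow {q : α} {A : Matrix m m α} (h : ‖q‖ * ‖A‖ < 1) :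
    Summable fun k ↦ q ^ k • A ^ k := by
  simpa using summable_pow_smul_mul_pow h 1

theorem tsum_pow_smul_mul_pow_mul_eq_one {q : α} {A B S : Matrix m m α}
    (h : ‖q‖ * ‖A‖ < 1) (hAB : Commute A B) (hSB : S * B = 1 - q • A) :
    (∑' k, q ^ k • (S * A ^ k)) * B = 1 := by
  have hstep (k : ℕ) :
      q ^ k • (S * A ^ k) * B = q ^ k • A ^ k - q ^ (k + 1) • A ^ (k + 1) := by
    rw [smul_mul, mul_assoc, (hAB.pow_left k).eq, ← mul_assoc, hSB, sub_mul, one_mul,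
      smul_mul, ← pow_succ', smul_sub, smul_smul, ← pow_succ]
  simpa using tsum_mul_eq_of_mul_eq_sub_succ (summable_pow_smul_mul_pow h S) hstep
    (summable_pow_smul_pow h).tendsto_atTop_zero

end NormedDivisionRing

section Quaternion

noncomputable def resolventDenom (p : ℍ[ℝ]) (A : Matrix m m ℍ[ℝ]) : Matrix m m ℍ[ℝ] :=
  ‖p‖ ^ 2 • A ^ 2 - (2 * p.re) • A + 1

variable (p : ℍ[ℝ]) (A : Matrix m m ℍ[ℝ])

theorem commute_resolventDenom : Commute A (resolventDenom p A) :=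
  ((((Commute.refl A).pow_right 2).smul_right _).sub_right
    ((Commute.refl A).smul_right _)).add_right (Commute.one_right A)

theorem pow_mul_resolventDenom (k : ℕ) :
    A ^ k * resolventDenom p A =
      (star p * p) • A ^ (k + 2) - (star p + p) • A ^ (k + 1) + A ^ k := by
  have hnorm : ((‖p‖ ^ 2 : ℝ) : ℍ[ℝ]) = star p * p := by
    rw [Quaternion.star_mul_self, Quaternion.normSq_eq_norm_mul_self, sq]
  rw [resolventDenom, mul_add, mul_sub, mul_one, Matrix.mul_smul, Matrix.mul_smul, ← pow_add,
    ← pow_succ, ← algebraMap_smul ℍ[ℝ] (‖p‖ ^ 2), ← algebraMap_smul ℍ[ℝ] (2 * p.re),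
    Quaternion.algebraMap_def, hnorm, ← Quaternion.star_add_self']

theorem pow_smul_pow_mul_resolventDenom (k : ℕ) :
    p ^ k • A ^ k * resolventDenom p A =
      (p ^ k • A ^ k - (star p * p ^ k) • A ^ (k + 1)) -
        (p ^ (k + 1) • A ^ (k + 1) - (star p * p ^ (k + 1)) • A ^ (k + 2)) := by
  have hcomm : Commute (p ^ k) (star p) := (Commute.symm (star_comm_self' p)).pow_left k
  have hquad : p ^ k * (star p * p) = star p * p ^ (k + 1) := by
    rw [← mul_assoc, hcomm.eq, mul_assoc, ← pow_succ]
  have hlin : p ^ k * (star p + p) = star p * p ^ k + p ^ (k + 1) := by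
    rw [mul_add, hcomm.eq, ← pow_succ]
  rw [smul_mul, pow_mul_resolventDenom, smul_add, smul_sub, smul_smul, smul_smul, hquad, hlin,
    add_smul]
  abel

theorem tsum_pow_smul_pow_mul_resolventDenom (h : ‖p‖ * ‖A‖ < 1) :
    (∑' k, p ^ k • A ^ k) * resolventDenom p A = 1 - star p • A := by
  have htail : Tendsto (fun k ↦ (star p * p ^ k) • A ^ (k + 1)) atTop (𝓝 0) := by
    simpa [smul_smul, ← pow_succ'] using
      (summable_pow_smul_mul_pow h A).tendsto_atTop_zero.const_smul (star p)
  simpa using tsum_mul_eq_of_mul_eq_sub_succ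
    (w := fun k ↦ p ^ k • A ^ k - (star p * p ^ k) • A ^ (k + 1)) (summable_pow_smul_pow h)
    (pow_smul_pow_mul_resolventDenom p A)
    (by simpa using (summable_pow_smul_pow h).tendsto_atTop_zero.sub htail)

theorem isUnit_resolventDenom (h : ‖p‖ * ‖A‖ < 1) : IsUnit (resolventDenom p A) :=
  .of_mul_eq_one_right _ <| tsum_pow_smul_mul_pow_mul_eq_one (by rwa [norm_star])
    (commute_resolventDenom p A) (tsum_pow_smul_pow_mul_resolventDenom p A h)

end Quaternion

end Matrix

theorem slice_regular_resolvent (n : ℕ) (A : Matrix (Fin n) (Fin n) ℍ[ℝ]) (p : ℍ[ℝ])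
    (h : ‖p‖ * ‖A‖ < 1) :
    IsUnit ((‖p‖ ^ 2) • A ^ 2 - (2 * p.re) • A + (1 : Matrix (Fin n) (Fin n) ℍ[ℝ])) ∧
      ∑' k : ℕ, (p ^ k) • A ^ k =
        ((1 : Matrix (Fin n) (Fin n) ℍ[ℝ]) - (star p) • A) *
          Ring.inverse ((‖p‖ ^ 2) • A ^ 2 - (2 * p.re) • A + 1) := by
  have hunit := Matrix.isUnit_resolventDenom p A h
  refine ⟨hunit, ?_⟩
  rw [← Matrix.tsum_pow_smul_pow_mul_resolventDenom p A h]
  exact (Ring.mul_inverse_cancel_right _ _ hunit).symm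
end

section
/- Schwarz lemma for quaternionic Schur multipliers: let s : 𝔹 → ℍ be given by a power series s(p) = ∑_{n≥0} pⁿ sₙ on the unit ball 𝔹 of ℍ, and suppose the kernel k_s(p,q) = ∑_{n=0}^∞ pⁿ (1 - s(p)·conj(s(q))) conj(q)ⁿ is positive definite on 𝔹 and s(0) = 0. Write s(p) = p·s⁽¹⁾(p) with s⁽¹⁾(p) = ∑_{n≥0} pⁿ s_{n+1}. Then the kernel k_{s⁽¹⁾}(p,q) = ∑_{n=0}^∞ pⁿ (1 - s⁽¹⁾(p)·conj(s⁽¹⁾(q))) conj(q)ⁿ is also positive definite on 𝔹. -/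
open scoped Quaternion

/-- A quaternion-valued kernel on the open unit ball `𝔹` of `ℍ` is positive definite if it is
Hermitian and all the associated quadratic forms are nonnegative. -/
def IsPosDefKernel (k : ℍ[ℝ] → ℍ[ℝ] → ℍ[ℝ]) : Prop :=
  (∀ p q : ℍ[ℝ], ‖p‖ < 1 → ‖q‖ < 1 → star (k p q) = k q p) ∧
    ∀ (N : ℕ) (p : Fin N → ℍ[ℝ]) (c : Fin N → ℍ[ℝ]), (∀ i, ‖p i‖ < 1) →
      0 ≤ (∑ l, ∑ j, star (c l) * k (p l) (p j) * c j).re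

/-!
Since `s(0) = 0` we have `s(p) = p s⁽¹⁾(p)`, and telescoping the series defining the kernels gives
the identity `k_s(p,q) = 1 + p k_{s⁽¹⁾}(p,q) q̄` on `𝔹 × 𝔹`. As `k_s(0,·) = k_s(·,0) = 1`, adding the
point `0` with coefficient `-∑ cⱼ` to a family shows that `k_s - 1` is positive definite; replacing
`cⱼ` by `p̄ⱼ⁻¹ cⱼ` then gives the positivity of `k_{s⁽¹⁾}` on families of nonzero points. A family
containing `0` is the limit of families of nonzero points, and `k_{s⁽¹⁾}` is continuous on
`𝔹 × 𝔹`, so positivity passes to the limit.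
-/

open Filter Topology Metric

theorem Summable.pow_mul_succ {b : ℕ → ℝ} {r : ℝ} (h : Summable fun n => r ^ n * b n) :
    Summable fun n => r ^ n * b (n + 1) := by
  rcases eq_or_ne r 0 with rfl | hr
  · exact summable_of_ne_finset_zero (s := {0}) fun n hn => by
      simp [zero_pow (Finset.notMem_singleton.1 hn)]
  · refine (((summable_nat_add_iff 1).2 h).mul_left r⁻¹).congr fun n => ?_
    rw [pow_succ', mul_assoc, inv_mul_cancel_left₀ hr]

section SliceSeries

variable {R : Type*} [NormedDivisionRing R]

theorem summable_pow_mul_mul_pow [CompleteSpace R] (c : R) {p q : R} (hp : ‖p‖ < 1)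
    (hq : ‖q‖ < 1) : Summable fun n => p ^ n * c * q ^ n := by
  refine Summable.of_norm <| ((summable_geometric_of_lt_one (r := ‖p‖ * ‖q‖) (by positivity)
    ?_).mul_left ‖c‖).congr fun n => ?_
  · exact mul_lt_one_of_nonneg_of_lt_one_left (norm_nonneg p) hp hq.le
  · rw [norm_mul, norm_mul, norm_pow, norm_pow, mul_pow]
    ring

noncomputable def sliceSeries (a : ℕ → R) (p : R) : R := ∑' n, p ^ n * a n

theorem sliceSeries_zero (a : ℕ → R) : sliceSeries a 0 = a 0 := by
  rw [sliceSeries, tsum_eq_single 0 fun n hn => by rw [zero_pow hn, zero_mul], pow_zero, one_mul]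

variable {a : ℕ → R}

theorem sliceSeries_eq_mul_sliceSeries_succ (ha₀ : a 0 = 0) {p : R}
    (ha : Summable fun n => p ^ n * a n) :
    sliceSeries a p = p * sliceSeries (fun n => a (n + 1)) p := by
  rw [sliceSeries, ha.tsum_eq_zero_add, ha₀, mul_zero, zero_add, sliceSeries, ← tsum_mul_left]
  simp only [pow_succ', mul_assoc]

theorem continuousOn_sliceSeries [CompleteSpace R]
    (ha : ∀ r : ℝ, 0 ≤ r → r < 1 → Summable fun n => r ^ n * ‖a n‖) :
    ContinuousOn (sliceSeries a) (ball 0 1) := by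
  intro p hp
  rw [mem_ball_zero_iff] at hp
  obtain ⟨r, hpr, hr⟩ := exists_between hp
  have hcont : ContinuousOn (sliceSeries a) (ball 0 r) := by
    refine continuousOn_tsum (fun n => by fun_prop) (ha r ((norm_nonneg p).trans hpr.le) hr)
      fun n x hx => ?_
    rw [norm_mul, norm_pow]
    gcongr
    exact (mem_ball_zero_iff.1 hx).le
  exact (hcont.continuousAt (isOpen_ball.mem_nhds (mem_ball_zero_iff.2 hpr))).continuousWithinAt

end SliceSeries

section SchurKernel

variable {R : Type*}

noncomputable def schurKernel [Ring R] [StarRing R] [TopologicalSpace R] (f : R → R) (p q : R) :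
    R :=
  ∑' n, p ^ n * (1 - f p * star (f q)) * star q ^ n

theorem star_schurKernel [Ring R] [StarRing R] [TopologicalSpace R] [ContinuousStar R]
    [T2Space R] (f : R → R) (p q : R) : star (schurKernel f p q) = schurKernel f q p := by
  rw [schurKernel, schurKernel, tsum_star]
  simp only [star_mul, star_pow, star_star, star_sub, star_one, mul_assoc]

theorem schurKernel_zero_left [Ring R] [StarRing R] [TopologicalSpace R] {f : R → R}
    (hf : f 0 = 0) (q : R) : schurKernel f 0 q = 1 := by
  rw [schurKernel, tsum_eq_single 0 fun n hn => by rw [zero_pow hn, zero_mul, zero_mul]]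
  simp [hf]

theorem schurKernel_zero_right [Ring R] [StarRing R] [TopologicalSpace R] {f : R → R}
    (hf : f 0 = 0) (p : R) : schurKernel f p 0 = 1 := by
  rw [schurKernel, tsum_eq_single 0 fun n hn => by rw [star_zero, zero_pow hn, mul_zero]]
  simp [hf]

variable [NormedDivisionRing R] [StarRing R] [NormedStarGroup R] [CompleteSpace R]

theorem schurKernel_eq_one_add {f g : R → R} {p q : R} (hp : ‖p‖ < 1) (hq : ‖q‖ < 1)
    (hfp : f p = p * g p) (hfq : f q = q * g q) :
    schurKernel f p q = 1 + p * schurKernel g p q * star q := by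
  set a : ℕ → R := fun n => p ^ n * 1 * star q ^ n
  set b : ℕ → R := fun n => p ^ n * (g p * star (g q)) * star q ^ n
  have ha : Summable a := summable_pow_mul_mul_pow 1 hp (by rwa [norm_star])
  have hb : Summable b := summable_pow_mul_mul_pow _ hp (by rwa [norm_star])
  have hf : ∀ n, p ^ n * (1 - f p * star (f q)) * star q ^ n = a n - b (n + 1) := by
    intro n
    simp only [a, b, hfp, hfq, star_mul, pow_succ p n, pow_succ' (star q) n, mul_sub, sub_mul,
      mul_assoc]
  have hg : ∀ n, p * (p ^ n * (1 - g p * star (g q)) * star q ^ n) * star q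
      = a (n + 1) - b (n + 1) := by
    intro n
    simp only [a, b, pow_succ' p n, pow_succ (star q) n, mul_sub, sub_mul, mul_assoc]
  rw [schurKernel, schurKernel, tsum_congr hf, ← tsum_mul_left, ← tsum_mul_right, tsum_congr hg,
    ha.tsum_sub ((summable_nat_add_iff 1).2 hb), ha.tsum_eq_zero_add,
    ((summable_nat_add_iff 1).2 ha).tsum_sub ((summable_nat_add_iff 1).2 hb)]
  simp only [a, pow_zero, mul_one]
  abel

theorem continuousOn_schurKernel_of_norm_le {g : R → R} {r M : ℝ} (hr₀ : 0 ≤ r) (hr : r < 1)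
    (hg : ContinuousOn g (ball 0 r)) (hM : ∀ x ∈ ball (0 : R) r, ‖g x‖ ≤ M) :
    ContinuousOn (Function.uncurry (schurKernel g)) (ball 0 r ×ˢ ball 0 r) := by
  refine continuousOn_tsum (u := fun n => (1 + M * M) * (r * r) ^ n) (fun n => ?_)
    ((summable_geometric_of_lt_one (by positivity) (by nlinarith)).mul_left _) ?_
  · have hg₁ : ContinuousOn (fun x : R × R => g x.1) (ball 0 r ×ˢ ball 0 r) :=
      hg.comp continuousOn_fst fun x hx => hx.1
    have hg₂ : ContinuousOn (fun x : R × R => g x.2) (ball 0 r ×ˢ ball 0 r) :=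
      hg.comp continuousOn_snd fun x hx => hx.2
    exact ((continuous_fst.pow n).continuousOn.mul (continuousOn_const.sub
      (hg₁.mul hg₂.star))).mul (continuous_snd.star.pow n).continuousOn
  · rintro n ⟨x, y⟩ ⟨hx, hy⟩
    have hgx := hM x hx
    have hM₀ : 0 ≤ M := (norm_nonneg _).trans hgx
    have hc : ‖1 - g x * star (g y)‖ ≤ 1 + M * M := by
      refine (norm_sub_le _ _).trans ?_
      rw [norm_one, norm_mul, norm_star]
      gcongr
      exact hM y hy
    calc ‖x ^ n * (1 - g x * star (g y)) * star y ^ n‖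
        = ‖x‖ ^ n * ‖1 - g x * star (g y)‖ * ‖y‖ ^ n := by
          rw [norm_mul, norm_mul, norm_pow, norm_pow, norm_star]
      _ ≤ r ^ n * (1 + M * M) * r ^ n := by
          gcongr
          exacts [(mem_ball_zero_iff.1 hx).le, (mem_ball_zero_iff.1 hy).le]
      _ = (1 + M * M) * (r * r) ^ n := by ring

theorem continuousOn_schurKernel [ProperSpace R] {g : R → R} (hg : ContinuousOn g (ball 0 1)) :
    ContinuousOn (Function.uncurry (schurKernel g)) (ball 0 1 ×ˢ ball 0 1) := by
  rintro ⟨p, q⟩ ⟨hp, hq⟩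
  rw [mem_ball_zero_iff] at hp hq
  obtain ⟨r, hpqr, hr⟩ := exists_between (max_lt hp hq)
  have hr₀ : 0 ≤ r := (norm_nonneg p).trans ((le_max_left _ _).trans hpqr.le)
  obtain ⟨M, hM⟩ := (isCompact_closedBall (0 : R) r).exists_bound_of_continuousOn
    (hg.mono (closedBall_subset_ball hr))
  have hcont := continuousOn_schurKernel_of_norm_le hr₀ hr (hg.mono (ball_subset_ball hr.le))
    fun x hx => hM x (ball_subset_closedBall hx)
  have hpq : (p, q) ∈ ball (0 : R) r ×ˢ ball (0 : R) r :=
    ⟨mem_ball_zero_iff.2 ((le_max_left _ _).trans_lt hpqr),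
      mem_ball_zero_iff.2 ((le_max_right _ _).trans_lt hpqr)⟩
  exact (hcont.continuousAt ((isOpen_ball.prod isOpen_ball).mem_nhds hpq)).continuousWithinAt

end SchurKernel

section QuadForm

noncomputable def quadForm (k : ℍ[ℝ] → ℍ[ℝ] → ℍ[ℝ]) {N : ℕ} (p c : Fin N → ℍ[ℝ]) : ℝ :=
  (∑ l, ∑ j, star (c l) * k (p l) (p j) * c j).re

theorem quadForm_conj (φ : ℍ[ℝ] → ℍ[ℝ]) (k : ℍ[ℝ] → ℍ[ℝ] → ℍ[ℝ]) {N : ℕ}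
    (p c : Fin N → ℍ[ℝ]) :
    quadForm (fun x y => φ x * k x y * star (φ y)) p c =
      quadForm k p fun i => star (φ (p i)) * c i := by
  simp only [quadForm, star_mul, star_star, mul_assoc]

variable {k k' : ℍ[ℝ] → ℍ[ℝ] → ℍ[ℝ]}

theorem quadForm_congr {N : ℕ} {p : Fin N → ℍ[ℝ]} (h : ∀ l j, k (p l) (p j) = k' (p l) (p j))
    (c : Fin N → ℍ[ℝ]) : quadForm k p c = quadForm k' p c := by
  simp only [quadForm, h]

theorem continuousAt_quadForm (hk : ContinuousOn (Function.uncurry k) (ball 0 1 ×ˢ ball 0 1))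
    {N : ℕ} {p : Fin N → ℍ[ℝ]} (hp : ∀ i, ‖p i‖ < 1) (c : Fin N → ℍ[ℝ]) :
    ContinuousAt (fun x => quadForm k x c) p := by
  have hkij : ∀ l j, ContinuousAt (fun x : Fin N → ℍ[ℝ] => k (x l) (x j)) p := fun l j =>
    ContinuousAt.comp (f := fun x : Fin N → ℍ[ℝ] => (x l, x j)) (g := Function.uncurry k)
      (hk.continuousAt ((isOpen_ball.prod isOpen_ball).mem_nhds
        ⟨mem_ball_zero_iff.2 (hp l), mem_ball_zero_iff.2 (hp j)⟩))
      (by fun_prop)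
  exact Quaternion.continuous_re.continuousAt.comp <| tendsto_finsetSum _ fun l _ =>
    tendsto_finsetSum _ fun j _ => (continuousAt_const.mul (hkij l j)).mul continuousAt_const

theorem quadForm_nonneg_of_forall_ne_zero
    (hk : ContinuousOn (Function.uncurry k) (ball 0 1 ×ˢ ball 0 1)) {N : ℕ} {p : Fin N → ℍ[ℝ]}
    (hp : ∀ i, ‖p i‖ < 1) (c : Fin N → ℍ[ℝ])
    (h : ∀ p' : Fin N → ℍ[ℝ], (∀ i, ‖p' i‖ < 1) → (∀ i, p' i ≠ 0) → 0 ≤ quadForm k p' c) :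
    0 ≤ quadForm k p c := by
  classical
  let P : ℍ[ℝ] → Fin N → ℍ[ℝ] := fun ε i => if p i = 0 then ε else p i
  have hP : Tendsto P (𝓝[≠] 0) (𝓝 p) := by
    have hP₀ : P 0 = p := funext fun i => ite_eq_right_iff.2 Eq.symm
    rw [← hP₀]
    exact ((continuous_pi fun i => continuous_id.if_const _ continuous_const).tendsto 0).mono_left
      nhdsWithin_le_nhds
  refine ge_of_tendsto ((continuousAt_quadForm hk hp c).tendsto.comp hP) ?_
  filter_upwards [self_mem_nhdsWithin, nhdsWithin_le_nhds (ball_mem_nhds (0 : ℍ[ℝ]) one_pos)]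
    with ε hε₀ hε₁
  refine h (P ε) (fun i => ?_) fun i => ?_ <;> by_cases hpi : p i = 0 <;> simp_all [P]

end QuadForm

namespace IsPosDefKernel

variable {k k' : ℍ[ℝ] → ℍ[ℝ] → ℍ[ℝ]}

theorem congr (hk : IsPosDefKernel k)
    (h : ∀ p q : ℍ[ℝ], ‖p‖ < 1 → ‖q‖ < 1 → k p q = k' p q) : IsPosDefKernel k' := by
  refine ⟨fun p q hp hq => by rw [← h p q hp hq, ← h q p hq hp, hk.1 p q hp hq], ?_⟩
  intro N p c hp
  show 0 ≤ quadForm k' p c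
  rw [← quadForm_congr fun l j => h _ _ (hp l) (hp j)]
  exact hk.2 N p c hp

theorem sub_one (hk : IsPosDefKernel k) (h₀ : ∀ q, k 0 q = 1) (h₀' : ∀ p, k p 0 = 1) :
    IsPosDefKernel fun p q => k p q - 1 := by
  refine ⟨fun p q hp hq => by rw [star_sub, star_one, hk.1 p q hp hq], ?_⟩
  intro N p c hp
  have h := hk.2 (N + 1) (Fin.cons 0 p) (Fin.cons (-∑ i, c i) c) (Fin.cases (by simp) hp)
  simp only [Fin.sum_univ_succ, Fin.cons_zero, Fin.cons_succ, h₀, h₀', mul_one] at h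
  convert h using 2
  simp only [mul_sub, sub_mul, mul_one, Finset.sum_sub_distrib, Finset.sum_add_distrib,
    Finset.sum_neg_distrib, ← Finset.mul_sum, ← Finset.sum_mul, ← star_sum, star_neg, neg_mul,
    mul_neg, neg_neg]
  congr 1
  abel

theorem quadForm_nonneg_of_mul_star (hk : IsPosDefKernel fun x y => x * k x y * star y)
    {N : ℕ} {p : Fin N → ℍ[ℝ]} (hp : ∀ i, ‖p i‖ < 1) (hne : ∀ i, p i ≠ 0)
    (c : Fin N → ℍ[ℝ]) : 0 ≤ quadForm k p c := by
  have h : 0 ≤ quadForm (fun x y => id x * k x y * star (id y)) p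
      (fun i => (star (p i))⁻¹ * c i) := hk.2 N p _ hp
  have hc : (fun i => star (id (p i)) * ((star (p i))⁻¹ * c i)) = c :=
    funext fun i => mul_inv_cancel_left₀ (star_ne_zero.2 (hne i)) (c i)
  rwa [quadForm_conj, hc] at h

end IsPosDefKernel

theorem schwarz_lemma_schur_multiplier (s : ℕ → ℍ[ℝ])
    (hconv : ∀ p : ℍ[ℝ], ‖p‖ < 1 → Summable (fun n : ℕ => ‖p ^ n * s n‖))
    (hs0 : s 0 = 0)
    (hpos : IsPosDefKernel (fun p q =>
      ∑' n : ℕ, p ^ n * (1 - (∑' m : ℕ, p ^ m * s m) * star (∑' m : ℕ, q ^ m * s m)) *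
        (star q) ^ n)) :
    IsPosDefKernel (fun p q =>
      ∑' n : ℕ, p ^ n *
        (1 - (∑' m : ℕ, p ^ m * s (m + 1)) * star (∑' m : ℕ, q ^ m * s (m + 1))) *
        (star q) ^ n) := by
  change IsPosDefKernel (schurKernel (sliceSeries s)) at hpos
  change IsPosDefKernel (schurKernel (sliceSeries fun n => s (n + 1)))
  have hs : ∀ r : ℝ, 0 ≤ r → r < 1 → Summable fun n => r ^ n * ‖s n‖ := fun r hr₀ hr₁ =>
    (hconv r (by rwa [Quaternion.norm_coe, Real.norm_of_nonneg hr₀])).congr fun n => by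
      rw [norm_mul, norm_pow, Quaternion.norm_coe, Real.norm_of_nonneg hr₀]
  have hfactor : ∀ p : ℍ[ℝ], ‖p‖ < 1 →
      sliceSeries s p = p * sliceSeries (fun n => s (n + 1)) p := fun p hp =>
    sliceSeries_eq_mul_sliceSeries_succ hs0 (hconv p hp).of_norm
  have hS₀ : sliceSeries s 0 = 0 := (sliceSeries_zero s).trans hs0
  have hshift : IsPosDefKernel fun p q =>
      p * schurKernel (sliceSeries fun n => s (n + 1)) p q * star q :=
    (hpos.sub_one (schurKernel_zero_left hS₀) (schurKernel_zero_right hS₀)).congr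
      fun p q hp hq => by
        rw [schurKernel_eq_one_add hp hq (hfactor p hp) (hfactor q hq), add_sub_cancel_left]
  have hcont := continuousOn_schurKernel
    (continuousOn_sliceSeries fun r hr₀ hr₁ => (hs r hr₀ hr₁).pow_mul_succ)
  refine ⟨fun p q _ _ => star_schurKernel _ p q, fun N p c hp => ?_⟩
  exact quadForm_nonneg_of_forall_ne_zero hcont hp c fun p' hp' hne =>
    hshift.quadForm_nonneg_of_mul_star hp' hne c
end
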